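/- For r > 0 with 2πr > arccosh(3/2), lim_{N→∞} (2πr/N) log J_N(E; exp(2πr/N)) = 2Γ(πr + φ(r)/2) - 2Γ(πr - φ(r)/2), where Γ(z) = ∫₀^z log(2 sinh x) dx and φ(r) = arccosh(cosh(2πr) - 1/2). -/

import Mathlib

open Real

/-- Inverse hyperbolic cosine (for `1 ≤ x`). -/
noncomputable def arcosh (x : ℝ) : ℝ := Real.log (x + Real.sqrt (x ^ 2 - 1))

noncomputable def JFigEightReal (r : ℝ) (N : ℕ) : ℝ :=
  ∑ k ∈ Finset.range N, ∏ j ∈ Finset.Icc 1 k,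
    (2 * Real.cosh (2 * π * r) - 2 * Real.cosh (2 * π * r * j / N))

noncomputable def GammaLob (z : ℝ) : ℝ := ∫ x in (0 : ℝ)..z, Real.log (2 * Real.sinh x)

noncomputable def phih (r : ℝ) : ℝ := _root_.arcosh (Real.cosh (2 * π * r) - 1 / 2)

/-!
Put `A = 2πr` and `g x = log (2 cosh A - 2 cosh x)`. Each factor of `J_N` is `exp (g (jA/N))`, so
`J_N` is a sum of `N` exponentials of Riemann sums of `g` with mesh `A/N`. On `[0, A)` the function
`g` is decreasing and vanishes exactly at `φ = φ(r)` (as `cosh φ = cosh A - 1/2`), so the largest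
exponent is the Riemann sum up to `φ`, which is `(N/A) ∫₀^φ g + O(1)`. Hence
`(A/N) log J_N = ∫₀^φ g + O(log N / N)`. Finally `2 cosh A - 2 cosh x` factors as
`2 sinh ((A + x)/2) · 2 sinh ((A - x)/2)`, which turns `∫₀^φ g` into
`2Γ(A/2 + φ/2) - 2Γ(A/2 - φ/2)`.
-/

open Real Filter Topology Set MeasureTheory intervalIntegral

section RiemannSum

variable {g : ℝ → ℝ} {h : ℝ} {k : ℕ}

lemma antitoneOn_comp_mul_right (hh : 0 < h) (hg : AntitoneOn g (Icc 0 (k * h))) :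
    AntitoneOn (fun t => g (t * h)) (Icc 0 (0 + k)) := by
  intro s hs t ht hst
  rw [zero_add] at hs ht
  exact hg ⟨by nlinarith [hs.1], by nlinarith [hs.2]⟩
    ⟨by nlinarith [ht.1], by nlinarith [ht.2]⟩ (by gcongr)

lemma AntitoneOn.mul_sum_le_integral (hh : 0 < h) (hg : AntitoneOn g (Icc 0 (k * h))) :
    h * ∑ j ∈ Finset.range k, g ((j + 1) * h) ≤ ∫ x in 0..k * h, g x := by
  have := (antitoneOn_comp_mul_right hh hg).sum_le_integral
  rw [integral_comp_mul_right _ hh.ne', smul_eq_mul] at this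
  push_cast at this
  simp only [zero_add, zero_mul] at this
  rwa [le_inv_mul_iff₀ hh] at this

lemma AntitoneOn.integral_le_mul_sum (hh : 0 < h) (hg : AntitoneOn g (Icc 0 (k * h))) :
    ∫ x in 0..k * h, g x ≤ h * ∑ j ∈ Finset.range k, g (j * h) := by
  have := (antitoneOn_comp_mul_right hh hg).integral_le_sum
  rw [integral_comp_mul_right _ hh.ne', smul_eq_mul] at this
  simp only [zero_add, zero_mul] at this
  rwa [inv_mul_le_iff₀ hh] at this

end RiemannSum

section LaplaceSum

variable {g : ℝ → ℝ} {L p : ℝ}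

lemma AntitoneOn.integral_le_sub_mul {a b : ℝ} (hab : a ≤ b) (hg : AntitoneOn g (Icc a b)) :
    ∫ x in a..b, g x ≤ (b - a) * g a := by
  calc ∫ x in a..b, g x
      ≤ ∫ _ in a..b, g a := by
        refine integral_mono_on hab (AntitoneOn.intervalIntegrable (by rwa [uIcc_of_le hab]))
          intervalIntegrable_const fun x hx => hg ⟨le_rfl, hab⟩ hx hx.1
    _ = (b - a) * g a := by simp

lemma AntitoneOn.intervalIntegrable_of_mem_Ico (hg : AntitoneOn g (Ico 0 L)) {d : ℝ}
    (hd : d ∈ Ico 0 L) : IntervalIntegrable g volume 0 d :=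
  (hg.mono (by rw [uIcc_of_le hd.1]; exact Icc_subset_Ico_right hd.2)).intervalIntegrable

lemma AntitoneOn.integral_le_integral_of_apply_eq_zero (hg : AntitoneOn g (Ico 0 L))
    (hp : p ∈ Ico 0 L) (hgp : g p = 0) {d : ℝ} (hd : d ∈ Ico 0 L) :
    ∫ x in 0..d, g x ≤ ∫ x in 0..p, g x := by
  have hint_p := hg.intervalIntegrable_of_mem_Ico hp
  have hint_d := hg.intervalIntegrable_of_mem_Ico hd
  rw [← sub_nonneg, integral_interval_sub_left hint_p hint_d]
  rcases le_total d p with hdp | hpd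
  · refine integral_nonneg hdp fun x hx => hgp ▸ hg ?_ hp hx.2
    exact ⟨hd.1.trans hx.1, hx.2.trans_lt hp.2⟩
  · rw [integral_symm, neg_nonneg]
    refine (integral_mono_on hpd (hint_p.symm.trans hint_d) intervalIntegrable_const
      fun x hx => hgp ▸ hg hp ?_ hx.1).trans (by simp)
    exact ⟨hp.1.trans hx.1, hx.2.trans_lt hd.2⟩

noncomputable def sumExpRiemannSums (g : ℝ → ℝ) (L : ℝ) (N : ℕ) : ℝ :=
  ∑ k ∈ Finset.range N, exp (∑ j ∈ Finset.range k, g ((j + 1) * (L / N)))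

variable (hg : AntitoneOn g (Ico 0 L)) (hp : p ∈ Ico 0 L) (hgp : g p = 0)
include hg hp hgp

lemma mul_log_sumExpRiemannSums_le {N : ℕ} (hN : 0 < N) :
    L / N * log (sumExpRiemannSums g L N) ≤ (∫ x in 0..p, g x) + L / N * log N := by
  set I := ∫ x in 0..p, g x
  have hh : 0 < L / N := div_pos (hp.1.trans_lt hp.2) (by exact_mod_cast hN)
  have hpartial : ∀ k < N, ∑ j ∈ Finset.range k, g ((j + 1) * (L / N)) ≤ I / (L / N) := by
    intro k hk
    have hkL : k * (L / N) < L := by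
      rw [mul_div_assoc', div_lt_iff₀ (by exact_mod_cast hN), mul_comm]
      exact mul_lt_mul_of_pos_left (by exact_mod_cast hk) (hp.1.trans_lt hp.2)
    rw [le_div_iff₀' hh]
    exact ((hg.mono (Icc_subset_Ico_right hkL)).mul_sum_le_integral hh).trans
      (hg.integral_le_integral_of_apply_eq_zero hp hgp ⟨by positivity, hkL⟩)
  have hbound : sumExpRiemannSums g L N ≤ N * exp (I / (L / N)) := by
    calc sumExpRiemannSums g L N
        ≤ ∑ _k ∈ Finset.range N, exp (I / (L / N)) :=
          Finset.sum_le_sum fun k hk => exp_le_exp.2 (hpartial k (Finset.mem_range.1 hk))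
      _ = N * exp (I / (L / N)) := by simp
  have hpos : 0 < sumExpRiemannSums g L N :=
    Finset.sum_pos (fun _ _ => exp_pos _) (Finset.nonempty_range_iff.2 hN.ne')
  calc L / N * log (sumExpRiemannSums g L N)
      ≤ L / N * log (N * exp (I / (L / N))) := by gcongr
    _ = I + L / N * log N := by
        rw [log_mul (by positivity) (exp_pos _).ne', log_exp, mul_add, mul_div_cancel₀ _ hh.ne',
          add_comm]

lemma sub_le_mul_log_sumExpRiemannSums {N : ℕ} (hN : 0 < N) :
    (∫ x in 0..p, g x) - L / N * g 0 ≤ L / N * log (sumExpRiemannSums g L N) := by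
  set h := L / N with hh_def
  have hL : 0 < L := hp.1.trans_lt hp.2
  have hh : 0 < h := div_pos hL (by exact_mod_cast hN)
  -- the last node `m * h` before the zero `p` of `g` carries the largest partial sum
  set m := ⌊p / h⌋₊
  have hmp : m * h ≤ p := (le_div_iff₀ hh).1 (Nat.floor_le (div_nonneg hp.1 hh.le))
  have hpm : p - m * h ≤ h := by
    linarith [(div_lt_iff₀ hh).1 (Nat.lt_floor_add_one (p / h))]
  have hmN : m < N := by
    have : (m : ℝ) * h < N * h := by
      rw [hh_def, mul_div_cancel₀ _ (by positivity)]
      exact hmp.trans_lt hp.2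
    exact_mod_cast lt_of_mul_lt_mul_right this hh.le
  have hmIco : (m : ℝ) * h ∈ Ico 0 L := ⟨by positivity, hmp.trans_lt hp.2⟩
  have hgm : 0 ≤ g (m * h) := hgp ▸ hg hmIco hp hmp
  have hshift : ∑ j ∈ Finset.range m, g ((j + 1) * h) =
      ∑ j ∈ Finset.range m, g (j * h) + g (m * h) - g 0 := by
    have h1 := Finset.sum_range_succ (fun j : ℕ => g (j * h)) m
    rw [Finset.sum_range_succ'] at h1
    push_cast at h1
    rw [zero_mul] at h1
    linarith
  have hriemann := (hg.mono (Icc_subset_Ico_right hmIco.2)).integral_le_mul_sum hh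
  have htail : (∫ x in 0..p, g x) - ∫ x in 0..m * h, g x ≤ (p - m * h) * g (m * h) := by
    rw [integral_interval_sub_left (hg.intervalIntegrable_of_mem_Ico hp)
      (hg.intervalIntegrable_of_mem_Ico hmIco)]
    exact (hg.mono (Icc_subset_Ico hmIco.1 hp.2)).integral_le_sub_mul hmp
  have hsingle : exp (∑ j ∈ Finset.range m, g ((j + 1) * h)) ≤ sumExpRiemannSums g L N :=
    Finset.single_le_sum (f := fun k : ℕ => exp (∑ j ∈ Finset.range k, g ((j + 1) * h)))
      (fun _ _ => (exp_pos _).le) (Finset.mem_range.2 hmN)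
  have hlog : ∑ j ∈ Finset.range m, g ((j + 1) * h) ≤ log (sumExpRiemannSums g L N) := by
    rwa [← log_exp (∑ j ∈ Finset.range m, g ((j + 1) * h)), log_le_log_iff (exp_pos _)
      ((exp_pos _).trans_le hsingle)]
  linarith [congrArg (h * ·) hshift, mul_le_mul_of_nonneg_left hlog hh.le,
    mul_le_mul_of_nonneg_right hpm hgm]

theorem tendsto_mul_log_sumExpRiemannSums :
    Tendsto (fun N : ℕ => L / N * log (sumExpRiemannSums g L N)) atTop
      (𝓝 (∫ x in 0..p, g x)) := by
  set I := ∫ x in 0..p, g x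
  have hstep : Tendsto (fun N : ℕ => L / N) atTop (𝓝 0) :=
    tendsto_const_div_atTop_nhds_zero_nat L
  have hlogN : Tendsto (fun N : ℕ => L / N * log N) atTop (𝓝 0) := by
    have := (isLittleO_log_id_atTop.tendsto_div_nhds_zero.comp
      tendsto_natCast_atTop_atTop).const_mul L
    simpa [mul_div_assoc', div_mul_eq_mul_div] using this
  refine tendsto_of_tendsto_of_tendsto_of_le_of_le' (g := fun N : ℕ => I - L / N * g 0)
    (h := fun N : ℕ => I + L / N * log N) ?_ ?_ ?_ ?_
  · simpa using tendsto_const_nhds.sub (hstep.mul_const (g 0))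
  · simpa using tendsto_const_nhds.add hlogN
  · filter_upwards [eventually_gt_atTop 0] with N hN
    exact sub_le_mul_log_sumExpRiemannSums hg hp hgp hN
  · filter_upwards [eventually_gt_atTop 0] with N hN
    exact mul_log_sumExpRiemannSums_le hg hp hgp hN

end LaplaceSum
lemma two_cosh_sub_two_cosh_pos {A x : ℝ} (h : |x| < |A|) : 0 < 2 * cosh A - 2 * cosh x := by
  linarith [cosh_lt_cosh.2 h]

lemma antitoneOn_log_two_cosh_sub_two_cosh (A : ℝ) :
    AntitoneOn (fun x => log (2 * cosh A - 2 * cosh x)) (Ico 0 A) := by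
  intro x hx y hy hxy
  have hA : 0 ≤ A := hx.1.trans hx.2.le
  refine log_le_log (two_cosh_sub_two_cosh_pos ?_) ?_
  · rw [abs_of_nonneg hy.1, abs_of_nonneg hA]
    exact hy.2
  · linarith [cosh_le_cosh.2 (by rwa [abs_of_nonneg hx.1, abs_of_nonneg hy.1] : |x| ≤ |y|)]

lemma two_cosh_two_mul_sub_two_cosh (b x : ℝ) :
    2 * cosh (2 * b) - 2 * cosh x = 2 * sinh (b + x / 2) * (2 * sinh (b - x / 2)) := by
  calc 2 * cosh (2 * b) - 2 * cosh x
      = 2 * cosh ((b + x / 2) + (b - x / 2)) - 2 * cosh ((b + x / 2) - (b - x / 2)) := by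
        congr 3 <;> ring
    _ = _ := by rw [cosh_add (b + x / 2), cosh_sub (b + x / 2)]; ring

lemma intervalIntegrable_log_two_sinh {z : ℝ} (hz : 0 ≤ z) :
    IntervalIntegrable (fun x => log (2 * sinh x)) volume 0 z := by
  have hmaj : IntervalIntegrable (fun x => |log x| + z) volume 0 z :=
    intervalIntegrable_log'.abs.add intervalIntegrable_const
  rw [intervalIntegrable_iff_integrableOn_Ioc_of_le hz] at hmaj ⊢
  refine hmaj.mono' (Measurable.aestronglyMeasurable (by fun_prop))
    ((ae_restrict_iff' measurableSet_Ioc).2 (ae_of_all _ fun x hx => ?_))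
  have hsinh : x < sinh x := self_lt_sinh_iff.2 hx.1
  have hlower : log x ≤ log (2 * sinh x) := log_le_log hx.1 (by linarith [hx.1])
  have hupper : log (2 * sinh x) ≤ x := by
    rw [log_le_iff_le_exp (by linarith [hx.1]), sinh_eq]
    linarith [exp_pos (-x)]
  rw [norm_eq_abs, abs_le]
  constructor <;> linarith [neg_abs_le (log x), abs_nonneg (log x), hx.2]

lemma GammaLob_sub_GammaLob {x y : ℝ} (hx : 0 ≤ x) (hy : 0 ≤ y) :
    GammaLob y - GammaLob x = ∫ t in x..y, log (2 * sinh t) :=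
  integral_interval_sub_left (intervalIntegrable_log_two_sinh hy)
    (intervalIntegrable_log_two_sinh hx)

lemma integral_log_two_cosh_two_mul_sub_two_cosh {b φ : ℝ} (hφ : 0 ≤ φ) (hφb : φ < 2 * b) :
    ∫ x in 0..φ, log (2 * cosh (2 * b) - 2 * cosh x) =
      2 * GammaLob (b + φ / 2) - 2 * GammaLob (b - φ / 2) := by
  have hpos : ∀ x ∈ uIcc 0 φ, 0 < b + x / 2 ∧ 0 < b - x / 2 := by
    intro x hx
    rw [uIcc_of_le hφ] at hx
    constructor <;> linarith [hx.1, hx.2]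
  have hsplit : EqOn (fun x => log (2 * cosh (2 * b) - 2 * cosh x))
      (fun x => log (2 * sinh (b + x / 2)) + log (2 * sinh (b - x / 2))) (uIcc 0 φ) := by
    intro x hx
    have hsinh₁ := sinh_pos_iff.2 (hpos x hx).1
    have hsinh₂ := sinh_pos_iff.2 (hpos x hx).2
    simp only
    rw [two_cosh_two_mul_sub_two_cosh, log_mul (by positivity) (by positivity)]
  have hint₁ : IntervalIntegrable (fun x => log (2 * sinh (b + x / 2))) volume 0 φ :=
    (ContinuousOn.log (by fun_prop) fun x hx => by
      have := sinh_pos_iff.2 (hpos x hx).1; positivity).intervalIntegrable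
  have hint₂ : IntervalIntegrable (fun x => log (2 * sinh (b - x / 2))) volume 0 φ :=
    (ContinuousOn.log (by fun_prop) fun x hx => by
      have := sinh_pos_iff.2 (hpos x hx).2; positivity).intervalIntegrable
  have hb : 0 ≤ b := by linarith
  rw [integral_congr hsplit, integral_add hint₁ hint₂,
    integral_comp_add_div (fun t => log (2 * sinh t)) two_ne_zero b,
    integral_comp_sub_div (fun t => log (2 * sinh t)) two_ne_zero b,
    ← GammaLob_sub_GammaLob (by simpa using hb) (by linarith),
    ← GammaLob_sub_GammaLob (by linarith) (by simpa using hb)]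
  simp only [zero_div, add_zero, sub_zero, smul_eq_mul]
  ring

lemma three_halves_lt_cosh {A : ℝ} (h : _root_.arcosh (3 / 2) < A) : 3 / 2 < cosh A := by
  have h₀ : 0 ≤ Real.arcosh (3 / 2) := Real.arcosh_nonneg (by norm_num)
  calc (3 / 2 : ℝ) = cosh (Real.arcosh (3 / 2)) := (Real.cosh_arcosh (by norm_num)).symm
    _ < cosh A := cosh_lt_cosh.2 (by rwa [abs_of_nonneg h₀, abs_of_nonneg (h₀.trans h.le)])

lemma cosh_phih {r : ℝ} (h : 3 / 2 < cosh (2 * π * r)) :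
    cosh (phih r) = cosh (2 * π * r) - 1 / 2 :=
  Real.cosh_arcosh (by linarith)

lemma phih_mem_Ico {r : ℝ} (hA : 0 < 2 * π * r) (h : 3 / 2 < cosh (2 * π * r)) :
    phih r ∈ Ico 0 (2 * π * r) := by
  have hφ : 0 ≤ phih r := Real.arcosh_nonneg (by linarith)
  refine ⟨hφ, ?_⟩
  have hlt : cosh (phih r) < cosh (2 * π * r) := by rw [cosh_phih h]; linarith
  rwa [cosh_lt_cosh, abs_of_nonneg hφ, abs_of_pos hA] at hlt

lemma JFigEightReal_eq_sumExpRiemannSums {r : ℝ} (hA : 0 < 2 * π * r) (N : ℕ) :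
    JFigEightReal r N = sumExpRiemannSums (fun x => log (2 * cosh (2 * π * r) - 2 * cosh x))
      (2 * π * r) N := by
  refine Finset.sum_congr rfl fun k hk => ?_
  rw [exp_sum, ← Finset.Ico_add_one_right_eq_Icc, Finset.prod_Ico_eq_prod_range,
    add_tsub_cancel_right]
  refine Finset.prod_congr rfl fun j hj => ?_
  have hjN : (j : ℝ) + 1 < N := by
    exact_mod_cast (Nat.succ_le_of_lt (Finset.mem_range.1 hj)).trans_lt (Finset.mem_range.1 hk)
  have harg : 2 * π * r * ((1 + j : ℕ) : ℝ) / N = (j + 1) * (2 * π * r / N) := by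
    push_cast; ring
  have hlt : (j + 1) * (2 * π * r / N) < 2 * π * r := by
    rw [mul_div_assoc', div_lt_iff₀ (by linarith), mul_comm]
    exact mul_lt_mul_of_pos_left hjN hA
  rw [harg, exp_log (two_cosh_sub_two_cosh_pos _)]
  rwa [abs_of_pos hA, abs_of_nonneg (by positivity)]

theorem stmt14_general (r : ℝ) (hbig : _root_.arcosh (3 / 2) < 2 * π * r) :
    Filter.Tendsto (fun N : ℕ => (2 * π * r / N) * Real.log (JFigEightReal r N))
      Filter.atTop
      (nhds (2 * GammaLob (π * r + phih r / 2) - 2 * GammaLob (π * r - phih r / 2))) := by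
  have hA : 0 < 2 * π * r := (Real.arcosh_nonneg (by norm_num)).trans_lt hbig
  have hcosh := three_halves_lt_cosh hbig
  have hφ := phih_mem_Ico hA hcosh
  have hzero : log (2 * cosh (2 * π * r) - 2 * cosh (phih r)) = 0 := by
    rw [cosh_phih hcosh, show 2 * cosh (2 * π * r) - 2 * (cosh (2 * π * r) - 1 / 2) = 1 by ring,
      log_one]
  have hintegral := integral_log_two_cosh_two_mul_sub_two_cosh (b := π * r) hφ.1
    (by linarith [hφ.2])
  rw [← mul_assoc] at hintegral
  rw [← hintegral]
  simp_rw [JFigEightReal_eq_sumExpRiemannSums hA]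
  exact tendsto_mul_log_sumExpRiemannSums (antitoneOn_log_two_cosh_sub_two_cosh _) hφ hzero

theorem stmt14 (r : ℝ) (hr : 0 < r) (hbig : _root_.arcosh (3 / 2) < 2 * π * r) :
    Filter.Tendsto (fun N : ℕ => (2 * π * r / N) * Real.log (JFigEightReal r N))
      Filter.atTop
      (nhds (2 * GammaLob (π * r + phih r / 2) - 2 * GammaLob (π * r - phih r / 2))) :=
  stmt14_general r hbig
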